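/- There exists K such that the following holds for every integer k ≥ K with k ≡ 0 (mod 4). Set m_k = ⌊k/12⌋ + 1 and a(n) = (2k/|B_k|) σ_{k−1}(n). Let b : {1, …, m_k − 1} → ℝ satisfy |b(m)| ≤ min(a(m), 1) for all 1 ≤ m < m_k, and define C_k = √(log k) · ( 11·√( ∑_{m=1}^{m_k−1} b(m)²/m^{k−1} ) + e^{18.72} · (41.41)^{k/2} · k^{−(k−1)/2} · | ∑_{m=1}^{m_k−1} b(m) e^{−7.288 m} | ). Then 2 C_k n^{k/2} ≤ a(n) for all integers n ≥ m_k. -/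

import Mathlib

/-!
Write `k = 2h` and `E = 2k/|B_k|`, so that `a(n) = E σ_{k-1}(n)`. Euler's formula for `ζ(k)`,
with `1 ≤ ζ(k) ≤ 2`, gives `|B_k| (2π)^k ≤ 4 k!`, and Stirling gives `k! ≤ e √k (k/e)^k`; hence
`E ≥ (2πe/k)^k / (2e)`. As `σ_{k-1}(n) ≥ n^{k-1}` and `n ≥ m_k ≥ k/12`, it suffices that
`2 C_k ≤ E (k/12)^h / k`.

From `|b(m)| ≤ min(E m^k, 1)` the square sum is at most `E k²`, and, splitting at `m = k/18`
(below which `m^k e^{-7.288 m}` still increases), the exponential sum is at most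
`k (E (k/18)^k + 1) e^{-7.288 k/18}`. Measured against `E (k/12)^h / k`, each resulting term is a
polynomial in `k` times `c^h` with `c < 1`, by the margins `12 < 2πe`,
`12 · 41.41 < 18² e^{7.288/9}` and `12 · 41.41 < (2πe)² e^{7.288/9}`; so all are eventually small.
-/

open Filter Real

/-- The divisor power sum `σ_l(n) = ∑_{d ∣ n} d^l`, as a real number. -/
noncomputable def sigmaR (l n : ℕ) : ℝ := ∑ d ∈ n.divisors, (d : ℝ) ^ l

/-- `m_k = ⌊k/12⌋ + 1`, the dimension of the space of weight-`k` modular forms for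
`k ≢ 2 mod 12`. -/
def mDim (k : ℕ) : ℕ := k / 12 + 1

/-- `a(n) = (2k/|B_k|) σ_{k−1}(n)`, the `n`-th Fourier coefficient of the weight-`k`
Eisenstein series. -/
noncomputable def aCoef (k n : ℕ) : ℝ :=
  (2 * (k : ℝ) / |((bernoulli k : ℚ) : ℝ)|) * sigmaR (k - 1) n

/-- `C_k = √(log k) · ( 11·√( ∑_{m=1}^{m_k−1} b(m)²/m^{k−1} )
  + e^{18.72} · (41.41)^{k/2} · k^{−(k−1)/2} · | ∑_{m=1}^{m_k−1} b(m) e^{−7.288 m} | )`. -/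
noncomputable def C7 (k : ℕ) (b : ℕ → ℝ) : ℝ :=
  Real.sqrt (Real.log k) *
    (11 * Real.sqrt (∑ m ∈ Finset.Ico 1 (mDim k), (b m) ^ 2 / (m : ℝ) ^ (k - 1)) +
      Real.exp 18.72 * (41.41 : ℝ) ^ ((k : ℝ) / 2) * (k : ℝ) ^ (-(((k : ℝ) - 1) / 2)) *
        |∑ m ∈ Finset.Ico 1 (mDim k), b m * Real.exp (-7.288 * (m : ℝ))|)

open Finset
open scoped Nat

noncomputable def eisConst (k : ℕ) : ℝ := 2 * (k : ℝ) / |((bernoulli k : ℚ) : ℝ)|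

lemma aCoef_eq (k n : ℕ) : aCoef k n = eisConst k * sigmaR (k - 1) n := rfl

lemma pow_le_sigmaR (l : ℕ) {n : ℕ} (hn : n ≠ 0) : (n : ℝ) ^ l ≤ sigmaR l n :=
  single_le_sum (f := fun d : ℕ => (d : ℝ) ^ l) (fun _ _ => by positivity)
    (Nat.mem_divisors_self n hn)

lemma sigmaR_le_pow_succ (l n : ℕ) : sigmaR l n ≤ (n : ℝ) ^ (l + 1) :=
  calc sigmaR l n ≤ ∑ _d ∈ n.divisors, (n : ℝ) ^ l :=
        sum_le_sum fun d hd => by gcongr; exact Nat.divisor_le hd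
    _ = #n.divisors * (n : ℝ) ^ l := by rw [sum_const, nsmul_eq_mul]
    _ ≤ n * (n : ℝ) ^ l := by gcongr; exact_mod_cast Nat.card_divisors_le_self n
    _ = (n : ℝ) ^ (l + 1) := by ring

lemma hasSum_zeta_two_mul_abs_bernoulli {j : ℕ} (hj : j ≠ 0) :
    HasSum (fun n : ℕ => 1 / (n : ℝ) ^ (2 * j))
      (|((bernoulli (2 * j) : ℚ) : ℝ)| * (2 * π) ^ (2 * j) / (2 * (2 * j)!)) := by
  have hz := hasSum_zeta_nat hj
  have h2 : (2 : ℝ) ^ (2 * j) = 2 * 2 ^ (2 * j - 1) := by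
    rw [← pow_succ', Nat.sub_add_cancel (by omega)]
  convert hz using 1
  rw [← abs_of_nonneg (hz.nonneg fun n => by positivity), abs_div, abs_mul, abs_mul, abs_mul,
    abs_pow, abs_neg, abs_one, one_pow, one_mul, abs_pow, abs_two, abs_pow, abs_of_pos pi_pos,
    Nat.abs_cast, mul_pow, h2]
  field_simp

lemma abs_bernoulli_two_mul_pos_and_le {j : ℕ} (hj : j ≠ 0) :
    0 < |((bernoulli (2 * j) : ℚ) : ℝ)| ∧
      |((bernoulli (2 * j) : ℚ) : ℝ)| * (2 * π) ^ (2 * j) ≤ 4 * (2 * j)! := by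
  have hsum := hasSum_zeta_two_mul_abs_bernoulli hj
  have hge : 1 ≤ |((bernoulli (2 * j) : ℚ) : ℝ)| * (2 * π) ^ (2 * j) / (2 * (2 * j)!) := by
    simpa using le_hasSum hsum 1 fun _ _ => by positivity
  have hle :
      |((bernoulli (2 * j) : ℚ) : ℝ)| * (2 * π) ^ (2 * j) / (2 * (2 * j)!) ≤ π ^ 2 / 6 := by
    refine hasSum_le (fun n => ?_) hsum hasSum_zeta_two
    rcases n.eq_zero_or_pos with rfl | hn
    · simp [hj]
    · exact one_div_pow_le_one_div_pow_of_le (by exact_mod_cast hn) (by omega)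
  refine ⟨abs_pos.2 fun hB => by norm_num [hB] at hge, ?_⟩
  rw [div_le_iff₀ (by positivity)] at hle
  have hπ : π ^ 2 ≤ 12 := by nlinarith [pi_lt_d2, pi_pos]
  nlinarith [(by positivity : (0 : ℝ) < (2 * j)!)]

lemma factorial_le_exp_one_mul_sqrt {n : ℕ} (hn : n ≠ 0) :
    (n ! : ℝ) ≤ exp 1 * √n * (n / exp 1) ^ n := by
  obtain ⟨m, rfl⟩ := Nat.exists_eq_succ_of_ne_zero hn
  have h : Stirling.stirlingSeq (m + 1) ≤ Stirling.stirlingSeq 1 :=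
    Stirling.stirlingSeq'_antitone (Nat.zero_le m)
  rw [Stirling.stirlingSeq_one, Stirling.stirlingSeq, div_le_iff₀ (by positivity),
    Real.sqrt_mul zero_le_two] at h
  calc ((m + 1)! : ℝ)
      ≤ exp 1 / √2 * (√2 * √(m + 1 : ℕ) * ((m + 1 : ℕ) / exp 1) ^ (m + 1)) := h
    _ = exp 1 * √(m + 1 : ℕ) * ((m + 1 : ℕ) / exp 1) ^ (m + 1) := by field_simp

lemma le_eisConst {k : ℕ} (hk : Even k) (hk0 : k ≠ 0) :
    (2 * π * exp 1 / k) ^ k / (2 * exp 1) ≤ eisConst k := by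
  obtain ⟨j, rfl⟩ := hk
  rw [← two_mul] at hk0 ⊢
  obtain ⟨hB, hBle⟩ := abs_bernoulli_two_mul_pos_and_le (j := j) (by omega)
  have hk : (1 : ℝ) ≤ (2 * j : ℕ) := by exact_mod_cast Nat.one_le_iff_ne_zero.2 hk0
  set κ : ℝ := ((2 * j : ℕ) : ℝ)
  set B := |((bernoulli (2 * j) : ℚ) : ℝ)|
  rw [eisConst, le_div_iff₀ hB]
  calc (2 * π * exp 1 / κ) ^ (2 * j) / (2 * exp 1) * B
      = B * (2 * π) ^ (2 * j) * (exp 1 / κ) ^ (2 * j) / (2 * exp 1) := by ring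
    _ ≤ 4 * (exp 1 * √κ * (κ / exp 1) ^ (2 * j)) * (exp 1 / κ) ^ (2 * j) / (2 * exp 1) := by
        gcongr ?_ * _ / _
        exact hBle.trans (by gcongr; exact factorial_le_exp_one_mul_sqrt hk0)
    _ = 2 * √κ := by
        rw [mul_assoc, mul_assoc, ← mul_pow]
        field_simp
        norm_num
    _ ≤ 2 * κ := by gcongr; exact Real.sqrt_le_self_iff.2 (Or.inr hk)

lemma pow_mul_exp_neg_mul_le {a x y : ℝ} {k : ℕ} (hx : 0 ≤ x) (hxy : x ≤ y) (hy : 0 < y)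
    (hay : a * y ≤ k) : x ^ k * exp (-a * x) ≤ y ^ k * exp (-a * y) := by
  have hslope : k * (x / y - 1) ≤ a * (x - y) := by
    rw [div_sub_one hy.ne', mul_div_assoc', div_le_iff₀ hy]
    nlinarith
  calc x ^ k * exp (-a * x) = (x / y) ^ k * y ^ k * exp (-a * x) := by
        rw [div_pow, div_mul_cancel₀ _ (by positivity)]
    _ ≤ exp (x / y - 1) ^ k * y ^ k * exp (-a * x) := by
        gcongr
        linarith [add_one_le_exp (x / y - 1)]
    _ = y ^ k * exp (k * (x / y - 1) - a * x) := by
        rw [← exp_nat_mul, sub_eq_add_neg _ (a * x), exp_add, neg_mul]; ring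
    _ ≤ y ^ k * exp (-a * y) := by
        gcongr
        linarith

lemma sq_div_pow_le {E x : ℝ} {l m : ℕ} (hE : 0 ≤ E) (hm : m ≠ 0)
    (hx : |x| ≤ min (E * sigmaR l m) 1) : x ^ 2 / (m : ℝ) ^ l ≤ E * m := by
  have hx1 : |x| ≤ 1 := hx.trans (min_le_right _ _)
  have hxσ : |x| ≤ E * sigmaR l m := hx.trans (min_le_left _ _)
  rw [div_le_iff₀ (by positivity)]
  calc x ^ 2 = |x| * |x| := by rw [sq, abs_mul_abs_self]
    _ ≤ E * sigmaR l m * 1 := mul_le_mul hxσ hx1 (abs_nonneg _) ((abs_nonneg x).trans hxσ)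
    _ ≤ E * (m : ℝ) ^ (l + 1) := by rw [mul_one]; gcongr; exact sigmaR_le_pow_succ l m
    _ = E * m * (m : ℝ) ^ l := by ring

lemma abs_mul_exp_neg_mul_le {E a x y : ℝ} {k m : ℕ} (hE : 0 ≤ E) (ha : 0 ≤ a) (hk : k ≠ 0)
    (hy : 0 < y) (hay : a * y ≤ k) (hx : |x| ≤ min (E * sigmaR (k - 1) m) 1) :
    |x * exp (-a * m)| ≤ (E * y ^ k + 1) * exp (-a * y) := by
  rw [abs_mul, abs_exp]
  rcases le_or_gt (m : ℝ) y with hmy | hym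
  · have hxm : |x| ≤ E * (m : ℝ) ^ k := by
      refine (hx.trans (min_le_left _ _)).trans ?_
      gcongr
      simpa [Nat.sub_add_cancel (Nat.one_le_iff_ne_zero.2 hk)] using sigmaR_le_pow_succ (k - 1) m
    calc |x| * exp (-a * m) ≤ E * ((m : ℝ) ^ k * exp (-a * m)) := by
          rw [← mul_assoc]; gcongr
      _ ≤ E * (y ^ k * exp (-a * y)) := by
          gcongr E * ?_; exact pow_mul_exp_neg_mul_le (by positivity) hmy hy hay
      _ ≤ (E * y ^ k + 1) * exp (-a * y) := by nlinarith [exp_pos (-a * y)]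
  · calc |x| * exp (-a * m) ≤ 1 * exp (-a * y) :=
          mul_le_mul (hx.trans (min_le_right _ _)) (exp_le_exp.2 (by nlinarith)) (exp_pos _).le
            zero_le_one
      _ ≤ (E * y ^ k + 1) * exp (-a * y) := by
          gcongr; linarith [show 0 ≤ E * y ^ k by positivity]

lemma sum_sq_div_pow_le {k : ℕ} {b : ℕ → ℝ}
    (hb : ∀ m, 1 ≤ m → m < mDim k → |b m| ≤ min (aCoef k m) 1) :
    ∑ m ∈ Ico 1 (mDim k), b m ^ 2 / (m : ℝ) ^ (k - 1) ≤ eisConst k * k ^ 2 := by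
  have hE : 0 ≤ eisConst k := by unfold eisConst; positivity
  calc ∑ m ∈ Ico 1 (mDim k), b m ^ 2 / (m : ℝ) ^ (k - 1)
      ≤ ∑ _m ∈ Ico 1 (mDim k), eisConst k * k := sum_le_sum fun m hm => by
        obtain ⟨h1, h2⟩ := mem_Ico.1 hm
        refine (sq_div_pow_le hE (by omega) (hb m h1 h2)).trans ?_
        gcongr; exact_mod_cast (show m ≤ k by unfold mDim at h2; omega)
    _ = #(Ico 1 (mDim k)) * (eisConst k * k) := by rw [sum_const, nsmul_eq_mul]
    _ ≤ k * (eisConst k * k) := by gcongr; simp only [Nat.card_Ico, mDim]; omega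
    _ = eisConst k * k ^ 2 := by ring

lemma abs_sum_mul_exp_neg_mul_le {k : ℕ} {b : ℕ → ℝ} {a y : ℝ} (hk : k ≠ 0) (ha : 0 ≤ a)
    (hy : 0 < y) (hay : a * y ≤ k)
    (hb : ∀ m, 1 ≤ m → m < mDim k → |b m| ≤ min (aCoef k m) 1) :
    |∑ m ∈ Ico 1 (mDim k), b m * exp (-a * m)|
      ≤ k * ((eisConst k * y ^ k + 1) * exp (-a * y)) := by
  have hE : 0 ≤ eisConst k := by unfold eisConst; positivity
  calc |∑ m ∈ Ico 1 (mDim k), b m * exp (-a * m)|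
      ≤ ∑ m ∈ Ico 1 (mDim k), |b m * exp (-a * m)| := abs_sum_le_sum_abs _ _
    _ ≤ ∑ _m ∈ Ico 1 (mDim k), (eisConst k * y ^ k + 1) * exp (-a * y) :=
        sum_le_sum fun m hm => by
          obtain ⟨h1, h2⟩ := mem_Ico.1 hm
          exact abs_mul_exp_neg_mul_le hE ha hk hy hay (hb m h1 h2)
    _ = #(Ico 1 (mDim k)) * ((eisConst k * y ^ k + 1) * exp (-a * y)) := by
        rw [sum_const, nsmul_eq_mul]
    _ ≤ k * ((eisConst k * y ^ k + 1) * exp (-a * y)) := by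
        gcongr; simp only [Nat.card_Ico, mDim]; omega

lemma C7_two_mul_le {h : ℕ} (hh : h ≠ 0) {b : ℕ → ℝ}
    (hb : ∀ m, 1 ≤ m → m < mDim (2 * h) → |b m| ≤ min (aCoef (2 * h) m) 1) :
    C7 (2 * h) b ≤ ((2 * h : ℕ) : ℝ) * (11 * (√(eisConst (2 * h)) * (2 * h : ℕ))
      + exp 18.72 * 41.41 ^ h * ((2 * h : ℕ) / ((2 * h : ℕ) : ℝ) ^ h)
        * ((2 * h : ℕ) * ((eisConst (2 * h) * ((2 * h : ℕ) / 18 : ℝ) ^ (2 * h) + 1)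
          * exp (-(7.288 / 9)) ^ h))) := by
  set κ : ℝ := ((2 * h : ℕ) : ℝ) with hκ_def
  have hκh : κ = 2 * h := by rw [hκ_def]; push_cast; ring
  have hκ : 1 ≤ κ := by rw [hκh]; norm_cast; omega
  have hκ0 : 0 < κ := by linarith
  have hE : 0 ≤ eisConst (2 * h) := by unfold eisConst; positivity
  have hS : √(∑ m ∈ Ico 1 (mDim (2 * h)), b m ^ 2 / (m : ℝ) ^ (2 * h - 1))
      ≤ √(eisConst (2 * h)) * κ :=
    calc _ ≤ √(eisConst (2 * h) * κ ^ 2) := sqrt_le_sqrt (sum_sq_div_pow_le hb)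
      _ = √(eisConst (2 * h)) * κ := by rw [sqrt_mul hE, sqrt_sq hκ0.le]
  have hT : |∑ m ∈ Ico 1 (mDim (2 * h)), b m * exp (-7.288 * m)|
      ≤ κ * ((eisConst (2 * h) * (κ / 18) ^ (2 * h) + 1) * exp (-(7.288 / 9)) ^ h) := by
    have hd : exp (-7.288 * (κ / 18)) = exp (-(7.288 / 9)) ^ h := by
      rw [← exp_nat_mul, hκh]; ring_nf
    simpa only [hd] using abs_sum_mul_exp_neg_mul_le (a := 7.288) (y := κ / 18) (by omega)
      (by norm_num) (by positivity) (by linarith) hb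
  have h41 : (41.41 : ℝ) ^ (κ / 2) = 41.41 ^ h := by
    rw [show κ / 2 = h by rw [hκh]; ring, rpow_natCast]
  have hκpow : κ ^ (-((κ - 1) / 2)) ≤ κ / κ ^ h :=
    calc κ ^ (-((κ - 1) / 2)) ≤ κ ^ ((1 : ℝ) - h) :=
          rpow_le_rpow_of_exponent_le hκ (by rw [hκh]; linarith)
      _ = κ / κ ^ h := by rw [rpow_sub hκ0, rpow_one, rpow_natCast]
  have hL : √(log κ) ≤ κ := sqrt_le_iff.2 ⟨hκ0.le, by nlinarith [log_le_sub_one_of_pos hκ0]⟩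
  rw [C7, h41]
  gcongr

lemma mul_sqrt_le_of_growth {κ E : ℝ} {h : ℕ} (hκ : 0 < κ)
    (hE : (2 * π * exp 1 / κ) ^ (2 * h) / (2 * exp 1) ≤ E)
    (hg : 3872 * exp 1 * κ ^ 6 * (12 ^ 2) ^ h ≤ ((2 * π * exp 1) ^ 2) ^ h) :
    44 * κ ^ 3 * √E ≤ E * (κ / 12) ^ h := by
  have hE0 : 0 ≤ E := le_trans (by positivity) hE
  have hsq : (44 * κ ^ 3) ^ 2 ≤ (√E * (κ / 12) ^ h) ^ 2 := by
    calc (44 * κ ^ 3) ^ 2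
        = 3872 * exp 1 * κ ^ 6 * (12 ^ 2) ^ h / (2 * exp 1 * (12 ^ 2) ^ h) := by
          field_simp; ring
      _ ≤ ((2 * π * exp 1) ^ 2) ^ h / (2 * exp 1 * (12 ^ 2) ^ h) := by gcongr
      _ = (2 * π * exp 1 / κ) ^ (2 * h) / (2 * exp 1) * ((κ / 12) ^ h) ^ 2 := by
          simp only [div_pow, mul_pow, ← pow_mul]
          field_simp
          ring
      _ ≤ (√E * (κ / 12) ^ h) ^ 2 := by rw [mul_pow (√E), sq_sqrt hE0]; gcongr
  have hle := (pow_le_pow_iff_left₀ (by positivity) (by positivity) two_ne_zero).1 hsq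
  calc 44 * κ ^ 3 * √E ≤ √E * (κ / 12) ^ h * √E := by gcongr
    _ = E * (κ / 12) ^ h := by rw [mul_right_comm, mul_self_sqrt hE0]

lemma mul_pow_mul_le_of_growth {κ d : ℝ} {h : ℕ} (hκ : 0 < κ)
    (hg : 8 * exp 18.72 * κ ^ 4 * (12 * 41.41 * d) ^ h ≤ (18 ^ 2) ^ h) :
    8 * κ ^ 3 * (exp 18.72 * 41.41 ^ h * (κ / κ ^ h)) * ((κ / 18) ^ (2 * h) * d ^ h)
      ≤ (κ / 12) ^ h :=
  calc 8 * κ ^ 3 * (exp 18.72 * 41.41 ^ h * (κ / κ ^ h)) * ((κ / 18) ^ (2 * h) * d ^ h)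
      = 8 * exp 18.72 * κ ^ 4 * (12 * 41.41 * d) ^ h * (κ / 12) ^ h / (18 ^ 2) ^ h := by
        simp only [div_pow, mul_pow, ← pow_mul]
        field_simp
        ring
    _ ≤ (18 ^ 2) ^ h * (κ / 12) ^ h / (18 ^ 2) ^ h := by gcongr
    _ = (κ / 12) ^ h := by field_simp

lemma mul_le_of_growth {κ d E : ℝ} {h : ℕ} (hκ : 0 < κ)
    (hE : (2 * π * exp 1 / κ) ^ (2 * h) / (2 * exp 1) ≤ E)
    (hg : 16 * exp 1 * exp 18.72 * κ ^ 4 * (12 * 41.41 * d) ^ h ≤ ((2 * π * exp 1) ^ 2) ^ h) :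
    8 * κ ^ 3 * (exp 18.72 * 41.41 ^ h * (κ / κ ^ h)) * d ^ h ≤ E * (κ / 12) ^ h :=
  calc 8 * κ ^ 3 * (exp 18.72 * 41.41 ^ h * (κ / κ ^ h)) * d ^ h
      = 16 * exp 1 * exp 18.72 * κ ^ 4 * (12 * 41.41 * d) ^ h / ((2 * π * exp 1) ^ 2) ^ h
        * ((2 * π * exp 1 / κ) ^ (2 * h) / (2 * exp 1) * (κ / 12) ^ h) := by
        simp only [div_pow, mul_pow, ← pow_mul]
        field_simp
        ring
    _ ≤ ((2 * π * exp 1) ^ 2) ^ h / ((2 * π * exp 1) ^ 2) ^ h * (E * (κ / 12) ^ h) := by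
        gcongr
    _ = E * (κ / 12) ^ h := by rw [div_self (by positivity), one_mul]

-- Multiplied by `k`, the three terms of the bound in `C7_two_mul_le` are at most a half, a quarter
-- and a quarter of `E (k/12)^h`.
lemma two_mul_C7_le {h : ℕ} (hh : h ≠ 0) {b : ℕ → ℝ}
    (hb : ∀ m, 1 ≤ m → m < mDim (2 * h) → |b m| ≤ min (aCoef (2 * h) m) 1)
    (h₁ : 3872 * exp 1 * ((2 * h : ℕ) : ℝ) ^ 6 * (12 ^ 2) ^ h ≤ ((2 * π * exp 1) ^ 2) ^ h)
    (h₂ : 8 * exp 18.72 * ((2 * h : ℕ) : ℝ) ^ 4 * (12 * 41.41 * exp (-(7.288 / 9))) ^ h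
      ≤ (18 ^ 2) ^ h)
    (h₃ : 16 * exp 1 * exp 18.72 * ((2 * h : ℕ) : ℝ) ^ 4
      * (12 * 41.41 * exp (-(7.288 / 9))) ^ h ≤ ((2 * π * exp 1) ^ 2) ^ h) :
    2 * C7 (2 * h) b ≤ eisConst (2 * h) * ((2 * h : ℕ) / 12 : ℝ) ^ h / (2 * h : ℕ) := by
  have hk0 : (0 : ℝ) < (2 * h : ℕ) := by norm_cast; omega
  have hE := le_eisConst (even_two_mul h) (by omega)
  have hE0 : 0 < eisConst (2 * h) := lt_of_lt_of_le (by positivity) hE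
  have h2 := mul_pow_mul_le_of_growth hk0 h₂
  rw [le_div_iff₀ hk0]
  linarith [mul_sqrt_le_of_growth hk0 hE h₁, mul_le_mul_of_nonneg_left h2 hE0.le,
    mul_le_of_growth hk0 hE h₃, mul_le_mul_of_nonneg_left (C7_two_mul_le hh hb) hk0.le]

lemma eventually_mul_pow_mul_pow_le_pow (A a : ℝ) (p : ℕ) {s t : ℝ} (hs : 0 ≤ s)
    (hst : s < t) : ∀ᶠ n : ℕ in atTop, A * (a * n) ^ p * s ^ n ≤ t ^ n := by
  have ht : 0 < t := hs.trans_lt hst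
  have hlim := (tendsto_pow_const_mul_const_pow_of_lt_one p (div_nonneg hs ht.le)
    ((div_lt_one ht).2 hst)).const_mul (A * a ^ p)
  rw [mul_zero] at hlim
  filter_upwards [hlim.eventually (ge_mem_nhds one_pos)] with n hn
  calc A * (a * n) ^ p * s ^ n = A * a ^ p * (n ^ p * (s / t) ^ n) * t ^ n := by
        rw [div_pow, mul_pow]; field_simp
    _ ≤ 1 * t ^ n := by gcongr
    _ = t ^ n := one_mul _

lemma seventeen_lt_two_pi_mul_exp_one : 17 < 2 * π * exp 1 := by
  nlinarith [pi_gt_d2, exp_one_gt_d9]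

lemma mul_exp_neg_lt_of_lt_mul_one_add {a c x : ℝ} (hc : 0 ≤ c) (h : a < c * (1 + x)) :
    a * exp (-x) < c := by
  rw [exp_neg, ← div_eq_mul_inv, div_lt_iff₀ (exp_pos x)]
  nlinarith [add_one_le_exp x]

lemma eventually_two_mul_C7_le :
    ∀ᶠ h : ℕ in atTop, ∀ b : ℕ → ℝ,
      (∀ m, 1 ≤ m → m < mDim (2 * h) → |b m| ≤ min (aCoef (2 * h) m) 1) →
        2 * C7 (2 * h) b ≤ eisConst (2 * h) * ((2 * h : ℕ) / 12 : ℝ) ^ h / (2 * h : ℕ) := by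
  have h17 := seventeen_lt_two_pi_mul_exp_one
  filter_upwards [eventually_ne_atTop 0,
    eventually_mul_pow_mul_pow_le_pow (3872 * exp 1) 2 6 (s := 12 ^ 2)
      (t := (2 * π * exp 1) ^ 2) (by positivity)
      (pow_lt_pow_left₀ (by linarith) (by norm_num) two_ne_zero),
    eventually_mul_pow_mul_pow_le_pow (8 * exp 18.72) 2 4
      (s := 12 * 41.41 * exp (-(7.288 / 9))) (t := 18 ^ 2) (by positivity)
      (mul_exp_neg_lt_of_lt_mul_one_add (by norm_num) (by norm_num)),
    eventually_mul_pow_mul_pow_le_pow (16 * exp 1 * exp 18.72) 2 4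
      (s := 12 * 41.41 * exp (-(7.288 / 9))) (t := (2 * π * exp 1) ^ 2) (by positivity)
      (mul_exp_neg_lt_of_lt_mul_one_add (by positivity) (by nlinarith))]
    with h hh h₁ h₂ h₃ b hb
  exact two_mul_C7_le hh hb (by exact_mod_cast h₁) (by exact_mod_cast h₂) (by exact_mod_cast h₃)

lemma eisConst_mul_pow_le_aCoef {h n : ℕ} (hh : h ≠ 0) (hn : mDim (2 * h) ≤ n) :
    eisConst (2 * h) * ((2 * h : ℕ) / 12 : ℝ) ^ h / (2 * h : ℕ) * (n : ℝ) ^ h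
      ≤ aCoef (2 * h) n := by
  have hE : 0 ≤ eisConst (2 * h) := by unfold eisConst; positivity
  have hkn : ((2 * h : ℕ) : ℝ) / 12 ≤ n := by
    rw [div_le_iff₀ (by norm_num)]
    exact_mod_cast (by unfold mDim at hn; omega : 2 * h ≤ n * 12)
  obtain ⟨j, rfl⟩ := Nat.exists_eq_succ_of_ne_zero hh
  calc eisConst (2 * (j + 1)) * ((2 * (j + 1) : ℕ) / 12 : ℝ) ^ (j + 1) / (2 * (j + 1) : ℕ)
        * (n : ℝ) ^ (j + 1)
      = eisConst (2 * (j + 1)) / 12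
          * (((2 * (j + 1) : ℕ) / 12 : ℝ) ^ j * (n : ℝ) ^ (j + 1)) := by
        rw [pow_succ]; field_simp
    _ ≤ eisConst (2 * (j + 1)) * ((n : ℝ) ^ j * (n : ℝ) ^ (j + 1)) := by
        gcongr
        linarith
    _ ≤ aCoef (2 * (j + 1)) n := by
        rw [← pow_add, aCoef_eq, show j + (j + 1) = 2 * (j + 1) - 1 by omega]
        gcongr
        exact pow_le_sigmaR _ (by unfold mDim at hn; omega)

/-- There exists `K` such that for every `k ≥ K` with `4 ∣ k`, and every
`b : ℕ → ℝ` with `|b(m)| ≤ min(a(m), 1)` for `1 ≤ m < m_k`, one has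
`2 C_k n^{k/2} ≤ a(n)` for all integers `n ≥ m_k`. -/
theorem floored_eisenstein_key_bound :
    ∃ K : ℕ, ∀ k : ℕ, K ≤ k → k % 4 = 0 →
      ∀ b : ℕ → ℝ, (∀ m : ℕ, 1 ≤ m → m < mDim k → |b m| ≤ min (aCoef k m) 1) →
        ∀ n : ℕ, mDim k ≤ n → 2 * C7 k b * (n : ℝ) ^ ((k : ℝ) / 2) ≤ aCoef k n := by
  obtain ⟨H, hH⟩ := eventually_atTop.1 eventually_two_mul_C7_le
  refine ⟨2 * H + 2, fun k hk hk4 b hb n hn => ?_⟩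
  obtain ⟨h, rfl⟩ : ∃ h, k = 2 * h := ⟨k / 2, by omega⟩
  calc 2 * C7 (2 * h) b * (n : ℝ) ^ (((2 * h : ℕ) : ℝ) / 2) = 2 * C7 (2 * h) b * n ^ h := by
        rw [Nat.cast_mul, Nat.cast_two, mul_div_cancel_left₀ _ two_ne_zero, rpow_natCast]
    _ ≤ eisConst (2 * h) * ((2 * h : ℕ) / 12 : ℝ) ^ h / (2 * h : ℕ) * n ^ h := by
        gcongr; exact hH h (by omega) b hb
    _ ≤ aCoef (2 * h) n := eisConst_mul_pow_le_aCoef (by omega) hn
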